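/- arXiv:1301.3638 — 4 statements merged into one kernel-verified Lean document; each statement's English description precedes it below -/
import Mathlib

section
/- Let π be a set of prime numbers and let F be a formal Dirichlet series with integer coefficients. Define F^π to be the formal Dirichlet series with F^π(n) = 0 if n is divisible by some prime in π, and F^π(n) = F(n) otherwise. If F is rational, i.e. there exist Dirichlet polynomials A and B with B(1) ≠ 0 and F*B = A, then F^π is rational, i.e. there exist Dirichlet polynomials A' and B' with B'(1) ≠ 0 and F^π*B' = A'. (Remark 2.1) -/
open ArithmeticFunction

/-- A Dirichlet polynomial: an integer Dirichlet series with finite support. -/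
def IsDirichletPoly (F : ArithmeticFunction ℤ) : Prop :=
  (Function.support fun n => F n).Finite

/-- A Dirichlet series is rational if it is a quotient of Dirichlet polynomials,
where the denominator has nonzero leading coefficient `B 1`. -/
def IsRationalSeries (F : ArithmeticFunction ℤ) : Prop :=
  ∃ A B : ArithmeticFunction ℤ, IsDirichletPoly A ∧ IsDirichletPoly B ∧ B 1 ≠ 0 ∧ F * B = A

/-- The Dirichlet series with coefficient `a` at `k` and zero elsewhere. -/
def cdelta (a : ℤ) (k : ℕ) : ArithmeticFunction ℤ :=
  ⟨fun n => if n = k ∧ n ≠ 0 then a else 0, by simp⟩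

/-- `F` is the formal product of the family `Fi`: each coefficient of `F` is the
corresponding coefficient of any large enough finite subproduct. -/
def IsFormalProduct {ι : Type*} (Fi : ι → ArithmeticFunction ℤ) (F : ArithmeticFunction ℤ) :
    Prop :=
  ∀ n : ℕ, ∃ S₀ : Finset ι, ∀ S : Finset ι, S₀ ⊆ S → F n = (∏ i ∈ S, Fi i) n

/-!
Keeping only the coefficients of a Dirichlet series at the integers of a set `S` is a ring
endomorphism as soon as `m * n ∈ S ↔ m ∈ S ∧ n ∈ S`, which holds for the integers divisible
by no prime of `π`. It preserves finite support and, since `1 ∈ S`, the coefficient at `1`;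
so `F * B = A` gives `F^π * B^π = A^π`.
-/

namespace ArithmeticFunction

variable {R : Type*}

noncomputable def indicator [Zero R] (S : Set ℕ) (f : ArithmeticFunction R) :
    ArithmeticFunction R :=
  ⟨S.indicator f, by simp⟩

theorem indicator_apply [Zero R] (S : Set ℕ) (f : ArithmeticFunction R) (n : ℕ) :
    indicator S f n = S.indicator f n :=
  rfl

theorem indicator_mul [Semiring R] {S : Set ℕ} (hS : ∀ m n, m * n ∈ S ↔ m ∈ S ∧ n ∈ S)
    (f g : ArithmeticFunction R) :
    indicator S (f * g) = indicator S f * indicator S g := by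
  ext n
  simp only [indicator_apply, mul_apply]
  by_cases hn : n ∈ S
  · rw [Set.indicator_of_mem hn, mul_apply]
    refine Finset.sum_congr rfl fun x hx => ?_
    rw [← (Nat.mem_divisorsAntidiagonal.mp hx).1] at hn
    obtain ⟨h₁, h₂⟩ := (hS _ _).mp hn
    rw [Set.indicator_of_mem h₁, Set.indicator_of_mem h₂]
  · rw [Set.indicator_of_notMem hn]
    refine (Finset.sum_eq_zero fun x hx => ?_).symm
    rw [← (Nat.mem_divisorsAntidiagonal.mp hx).1, hS, not_and_or] at hn
    rcases hn with h₁ | h₂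
    · rw [Set.indicator_of_notMem h₁, zero_mul]
    · rw [Set.indicator_of_notMem h₂, mul_zero]

end ArithmeticFunction

theorem IsDirichletPoly.indicator {A : ArithmeticFunction ℤ} (hA : IsDirichletPoly A)
    (S : Set ℕ) : IsDirichletPoly (A.indicator S) :=
  hA.subset fun _ hn => (Set.indicator_apply_ne_zero.mp hn).2

theorem IsRationalSeries.indicator {F : ArithmeticFunction ℤ} (hF : IsRationalSeries F)
    {S : Set ℕ} (hS : ∀ m n, m * n ∈ S ↔ m ∈ S ∧ n ∈ S) (hS₁ : 1 ∈ S) :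
    IsRationalSeries (F.indicator S) := by
  obtain ⟨A, B, hA, hB, hB₁, hFB⟩ := hF
  refine ⟨A.indicator S, B.indicator S, hA.indicator S, hB.indicator S, ?_, ?_⟩
  · rwa [ArithmeticFunction.indicator_apply, Set.indicator_of_mem hS₁]
  · rw [← ArithmeticFunction.indicator_mul hS, hFB]

def piFree (π : Set ℕ) : Set ℕ :=
  {n | ∀ p ∈ π, ¬p ∣ n}

theorem one_mem_piFree {π : Set ℕ} (hπ : ∀ p ∈ π, p.Prime) : 1 ∈ piFree π :=
  fun p hp => (hπ p hp).not_dvd_one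

theorem mul_mem_piFree_iff {π : Set ℕ} (hπ : ∀ p ∈ π, p.Prime) (m n : ℕ) :
    m * n ∈ piFree π ↔ m ∈ piFree π ∧ n ∈ piFree π := by
  simp only [piFree, Set.mem_ofPred_eq, ← forall₂_and]
  exact forall₂_congr fun p hp => by rw [(hπ p hp).dvd_mul, not_or]

/-- Remark 2.1: if $F$ is rational then so is $F^π$, the series obtained from $F$
by deleting all coefficients at integers divisible by a prime in $π$. -/
theorem rational_pi_part (π : Set ℕ) (hπ : ∀ p ∈ π, Nat.Prime p)
    (F Fpi : ArithmeticFunction ℤ)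
    (hzero : ∀ n : ℕ, (∃ p ∈ π, p ∣ n) → Fpi n = 0)
    (hsame : ∀ n : ℕ, (¬ ∃ p ∈ π, p ∣ n) → Fpi n = F n)
    (hF : IsRationalSeries F) :
    IsRationalSeries Fpi := by
  have hFpi : Fpi = F.indicator (piFree π) := by
    ext n
    rw [ArithmeticFunction.indicator_apply]
    by_cases hn : n ∈ piFree π
    · rw [Set.indicator_of_mem hn, hsame n (by simpa [piFree] using hn)]
    · rw [Set.indicator_of_notMem hn, hzero n (by simpa [piFree] using hn)]
  rw [hFpi]
  exact hF.indicator (mul_mem_piFree_iff hπ) (one_mem_piFree hπ)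
end

section
/- Let q ≥ 5 be a prime. If H is a proper subgroup of PSL(2,q) whose index |PSL(2,q):H| is odd, then q divides |PSL(2,q):H|. (Claim from the proof of Lemma 3.2, derived from Dickson's classification of the subgroups of PSL(2,q)) -/
/-- The projective special linear group `PSL(2,q)`: the quotient of `SL(2, ZMod q)`
by its center. -/
abbrev PSL (q : ℕ) : Type :=
  Matrix.SpecialLinearGroup (Fin 2) (ZMod q) ⧸
    Subgroup.center (Matrix.SpecialLinearGroup (Fin 2) (ZMod q))

/-- The projective general linear group `PGL(2,q)`: the quotient of `GL(2, ZMod q)`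
by its center. -/
abbrev PGL (q : ℕ) : Type :=
  Matrix.GeneralLinearGroup (Fin 2) (ZMod q) ⧸
    Subgroup.center (Matrix.GeneralLinearGroup (Fin 2) (ZMod q))

/-- The socle of `PGL(2,q)`: the image of `SL(2, ZMod q)` under the natural map
`SL(2, ZMod q) → GL(2, ZMod q) → PGL(2,q)`. -/
noncomputable def socPGL (q : ℕ) : Subgroup (PGL q) :=
  ((QuotientGroup.mk' (Subgroup.center (Matrix.GeneralLinearGroup (Fin 2) (ZMod q)))).comp
    (Matrix.SpecialLinearGroup.toGL)).range

/-!
Suppose `q ∤ k`, where `k` is the index of `H` in `G = PSL(2,q)`. Since `|G| = q(q² - 1)/2`,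
the Sylow `q`-subgroups of `G` have order `q`, and `H` contains one of them, `P`.

If `P` is the only Sylow `q`-subgroup of `H`, then `H` normalises `P`, so the number `n` of Sylow
`q`-subgroups of `G` divides `k`. Now `n ∣ (q² - 1)/2`, `n ≡ 1 [MOD q]`, and `n ≠ 1` because
`G` is simple; this forces `n = q + 1`, which is even.

Otherwise `H` has at least `q + 1` Sylow `q`-subgroups, so `|H| ≥ q(q + 1)` and `k < q`. But `G`
is simple, so it embeds into the symmetric group on `G ⧸ H`; then `q ∣ k!`, i.e. `q ≤ k`.
-/

open Subgroup

namespace Matrix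

section CommRing

variable {n R : Type*} [Fintype n] [DecidableEq n] [CommRing R]

theorem SpecialLinearGroup.range_toGL_eq_ker_det :
    (SpecialLinearGroup.toGL : SpecialLinearGroup n R →* GL n R).range =
      GeneralLinearGroup.det.ker := by
  ext g
  exact Set.ext_iff.mp SpecialLinearGroup.range_toGL g

theorem card_SL_mul_card_units [Nonempty n] :
    Nat.card (SpecialLinearGroup n R) * Nat.card Rˣ = Nat.card (GL n R) := by
  rw [card_eq_card_quotient_mul_card_subgroup (GeneralLinearGroup.det.ker : Subgroup (GL n R)),
    Nat.card_congr (QuotientGroup.quotientKerEquivOfSurjective _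
      GeneralLinearGroup.det_surjective).toEquiv,
    ← SpecialLinearGroup.range_toGL_eq_ker_det,
    ← Nat.card_congr (MonoidHom.ofInjective SpecialLinearGroup.toGL_injective).toEquiv, mul_comm]

theorem card_center_SL_two [IsDomain R] (hR : ringChar R ≠ 2) :
    Nat.card (center (SpecialLinearGroup (Fin 2) R)) = 2 := by
  rw [Nat.card_congr (SpecialLinearGroup.center_equiv_rootsOfUnity' (0 : Fin 2)).toEquiv,
    Fintype.card_fin]
  exact (IsPrimitiveRoot.neg_one (ringChar R) hR).card_rootsOfUnity

end CommRing

variable {F : Type*} [Field F] [Fintype F]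

theorem card_SL_two :
    Nat.card (SpecialLinearGroup (Fin 2) F) = Fintype.card F * (Fintype.card F ^ 2 - 1) := by
  have hq : 1 < Fintype.card F := Fintype.one_lt_card
  have h := card_SL_mul_card_units (n := Fin 2) (R := F)
  rw [card_GL_field, Fin.prod_univ_two, Nat.card_units, Nat.card_eq_fintype_card (α := F)] at h
  simp only [Fin.val_zero, Fin.val_one, pow_zero, pow_one, sq, ← Nat.mul_sub_one] at h
  refine Nat.eq_of_mul_eq_mul_right (Nat.sub_pos_of_lt hq) (h.trans ?_)
  rw [sq]
  ring

theorem two_mul_card_PSL_two (hF : ringChar F ≠ 2) :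
    2 * Nat.card (ProjectiveSpecialLinearGroup (Fin 2) F) =
      Fintype.card F * (Fintype.card F ^ 2 - 1) := by
  rw [← card_SL_two,
    card_eq_card_quotient_mul_card_subgroup (center (SpecialLinearGroup (Fin 2) F)),
    card_center_SL_two hF, mul_comm]

end Matrix

theorem Nat.eq_add_one_of_two_mul_dvd_sq_sub_one {p n : ℕ} (hp : 1 < p)
    (hn : 2 * n ∣ p ^ 2 - 1) (hmod : n ≡ 1 [MOD p]) (hn1 : n ≠ 1) : n = p + 1 := by
  obtain ⟨t, ht⟩ := hn
  have hp2 : p < p ^ 2 := by nlinarith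
  have hn0 : n ≠ 0 := by rintro rfl; omega
  obtain ⟨s, hs⟩ := (Nat.modEq_iff_dvd' (by omega)).mp hmod.symm
  obtain rfl : n = p * s + 1 := by omega
  have heq : 2 * (p * s + 1) * t + 1 = p ^ 2 := by omega
  have hpt : p ≤ 2 * t + 1 := by
    refine Nat.le_of_dvd (by omega) ((Nat.dvd_add_right (dvd_mul_right p (2 * s * t))).mp ?_)
    exact ⟨p, by rw [← sq, ← heq]; ring⟩
  have hs2 : s < 2 := by
    by_contra! hs2
    have := Nat.mul_le_mul_left (p * s + 1) hpt
    nlinarith [Nat.mul_le_mul_left (p * p) hs2]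
  interval_cases s <;> omega

namespace Sylow

variable {G : Type*} [Group G] {p : ℕ}

theorem le_normalizer_of_subsingleton {H : Subgroup G} [Subsingleton (Sylow p H)]
    (P : Sylow p G) (hP : (P : Subgroup G) ≤ H) : H ≤ normalizer (P : Set G) :=
  (normal_subgroupOf_iff_le_normalizer hP).mp (normal_of_subsingleton (P.subtype hP))

variable [Fact p.Prime] [Finite G]

theorem exists_le_of_not_dvd_index {H : Subgroup G} (hH : ¬ p ∣ H.index) :
    ∃ P : Sylow p G, (P : Subgroup G) ≤ H := by
  obtain ⟨Q⟩ : Nonempty (Sylow p H) := inferInstance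
  have hQ : ¬ p ∣ (Q.map H.subtype).index := by
    rw [index_map_subtype]
    exact Nat.Prime.not_dvd_mul Fact.out Q.not_dvd_index hH
  exact ⟨(Q.2.map H.subtype).toSylow hQ, map_subtype_le _⟩

theorem succ_mul_card_le_card [Nontrivial (Sylow p G)] (P : Sylow p G) :
    (p + 1) * Nat.card P ≤ Nat.card G := by
  have hn : 1 < Nat.card (Sylow p G) := Finite.one_lt_card
  have hpn : p + 1 ≤ Nat.card (Sylow p G) := by
    have := Nat.le_of_dvd (by omega) <|
      (Nat.modEq_iff_dvd' hn.le).mp (card_sylow_modEq_one p G).symm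
    omega
  calc (p + 1) * Nat.card P
      ≤ Nat.card (Sylow p G) * Nat.card (normalizer (P : Set G)) :=
        Nat.mul_le_mul hpn (card_le_of_le le_normalizer)
    _ = Nat.card G := by
        rw [card_eq_index_normalizer P, mul_comm]
        exact card_mul_index _

end Sylow

theorem IsSimpleGroup.prime_le_index {G : Type*} [Group G] [Finite G] [IsSimpleGroup G]
    {H : Subgroup G} (hH : H ≠ ⊤) {p : ℕ} (hp : p.Prime) (hpG : p ∣ Nat.card G) :
    p ≤ H.index := by
  have hcore : H.normalCore = ⊥ :=
    (H.normalCore_normal.eq_bot_or_eq_top).resolve_right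
      fun h ↦ hH (top_le_iff.mp (h ▸ H.normalCore_le))
  have hdvd : Nat.card G ∣ H.index.factorial := by
    rw [← index_bot, ← hcore, normalCore_eq_ker, index_ker, index_eq_card, ← Nat.card_perm]
    exact card_subgroup_dvd_card _
  exact hp.dvd_factorial.mp (hpG.trans hdvd)

section TwoMulCard

variable {G : Type*} [Group G] [Finite G] {p : ℕ} [Fact p.Prime]

theorem Sylow.card_eq_of_two_mul_card (hp2 : p ≠ 2) (hG : 2 * Nat.card G = p * (p ^ 2 - 1))
    (P : Sylow p G) : Nat.card P = p := by
  have hp : p.Prime := Fact.out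
  have h2 : ¬ p ∣ 2 := fun h ↦ hp2 ((Nat.prime_dvd_prime_iff_eq hp Nat.prime_two).mp h)
  have hpsq : ¬ p ∣ p ^ 2 - 1 := fun h ↦ hp.not_dvd_one <| by
    simpa [Nat.sub_sub_self (Nat.one_le_pow _ _ hp.pos)] using
      Nat.dvd_sub (dvd_pow_self p two_ne_zero) h
  have hsq : p ^ 2 - 1 ≠ 0 := Nat.sub_ne_zero_of_lt (Nat.one_lt_pow two_ne_zero hp.one_lt)
  have hfac := congrArg (·.factorization p) hG
  simp only [Nat.factorization_mul two_ne_zero Nat.card_pos.ne',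
    Nat.factorization_mul hp.ne_zero hsq, Finsupp.add_apply, hp.factorization_self,
    Nat.factorization_eq_zero_of_not_dvd hpsq, Nat.factorization_eq_zero_of_not_dvd h2,
    zero_add, add_zero] at hfac
  rw [P.card_eq_multiplicity, hfac, pow_one]

theorem card_sylow_eq_of_two_mul_card [IsSimpleGroup G] (hp2 : p ≠ 2)
    (hG : 2 * Nat.card G = p * (p ^ 2 - 1)) : Nat.card (Sylow p G) = p + 1 := by
  have hp : p.Prime := Fact.out
  obtain ⟨P⟩ : Nonempty (Sylow p G) := inferInstance
  have hP := P.card_eq_of_two_mul_card hp2 hG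
  have hindex : 2 * (P : Subgroup G).index = p ^ 2 - 1 := by
    apply Nat.eq_of_mul_eq_mul_left hp.pos
    rw [← hG, ← card_mul_index (P : Subgroup G), hP]
    ring
  refine Nat.eq_add_one_of_two_mul_dvd_sq_sub_one hp.one_lt
    (hindex ▸ Nat.mul_dvd_mul_left 2 P.card_dvd_index) (card_sylow_modEq_one p G) fun h ↦ ?_
  have : Subsingleton (Sylow p G) := (Nat.card_eq_one_iff_unique.mp h).1
  rcases (Sylow.normal_of_subsingleton P).eq_bot_or_eq_top with hbot | htop
  · rw [hbot, card_bot] at hP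
    exact hp.one_lt.ne hP
  · rw [htop, card_top] at hP
    rw [hP] at hG
    have : 4 ≤ p ^ 2 := by nlinarith [hp.two_le]
    have := Nat.eq_of_mul_eq_mul_right hp.pos (hG.trans (mul_comm _ _))
    omega

theorem IsSimpleGroup.dvd_index_of_odd_index [IsSimpleGroup G] (hp2 : p ≠ 2)
    (hG : 2 * Nat.card G = p * (p ^ 2 - 1)) {H : Subgroup G} (hH : H ≠ ⊤)
    (hodd : Odd H.index) : p ∣ H.index := by
  have hp : p.Prime := Fact.out
  by_contra hpH
  obtain ⟨P, hPH⟩ := Sylow.exists_le_of_not_dvd_index hpH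
  rcases subsingleton_or_nontrivial (Sylow p H) with _ | _
  · have : p + 1 ∣ H.index := by
      rw [← card_sylow_eq_of_two_mul_card hp2 hG, P.card_eq_index_normalizer]
      exact index_dvd_of_le (P.le_normalizer_of_subsingleton hPH)
    exact hodd.not_two_dvd_nat ((hp.odd_of_ne_two hp2).add_one.two_dvd.trans this)
  · have hpG : p ∣ Nat.card G := P.card_eq_of_two_mul_card hp2 hG ▸ P.card_subgroup_dvd_card
    have hcardH := (P.subtype hPH).succ_mul_card_le_card
    rw [Sylow.coe_subtype, Nat.card_congr (subgroupOfEquivOfLe hPH).toEquiv,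
      P.card_eq_of_two_mul_card hp2 hG] at hcardH
    have hpk := IsSimpleGroup.prime_le_index hH hp hpG
    have hGp : (p + 1) * p * p ≤ Nat.card G := card_mul_index H ▸ Nat.mul_le_mul hcardH hpk
    have : p * (p ^ 2 - 1) ≤ p * p ^ 2 := Nat.mul_le_mul_left p (Nat.sub_le _ _)
    nlinarith [pow_pos hp.pos 2]

end TwoMulCard

/-- Every proper subgroup of odd index in ,  prime, has index
divisible by . -/
theorem q_dvd_odd_index_PSL (q : ℕ) (hq : Nat.Prime q) (hq5 : 5 ≤ q)
    (H : Subgroup (PSL q)) (hH : H ≠ ⊤) (hodd : Odd H.index) :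
    q ∣ H.index := by
  have : Fact q.Prime := ⟨hq⟩
  have : IsSimpleGroup (PSL q) :=
    Matrix.ProjectiveSpecialLinearGroup.rank_two_simple (by rw [Nat.card_zmod]; omega)
  have hcard : 2 * Nat.card (PSL q) = q * (q ^ 2 - 1) := by
    simpa only [ZMod.card] using
      Matrix.two_mul_card_PSL_two (F := ZMod q) (by rw [ZMod.ringChar_zmod_n]; omega)
  exact IsSimpleGroup.dvd_index_of_odd_index (by omega) hcard hH hodd
end

section
/- Let q ≥ 5 be a prime and let S denote the image of SL(2, ZMod q) under the natural homomorphism to PGL(2,q). If Y is a proper subgroup of PGL(2,q) such that Y·S = PGL(2,q) and the index |PGL(2,q):Y| is odd, then q divides |PGL(2,q):Y|. (Claim from the proof of Lemma 3.2, derived from Dickson's classification, for the almost simple group PGL(2,q)) -/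
/-!
Let `G = PGL(2,q)` and suppose `q ∤ |G : Y|`. Since `|G| = q(q² - 1)`, the Sylow `q`-subgroups of
`G` have order `q`; the images of the upper and lower unitriangular groups are two of them, so
their number `n_q(G)` is `≡ 1 (mod q)`, divides `q² - 1` and is not `1`, which forces
`n_q(G) = q + 1`. The Sylow `q`-subgroups of `Y` are Sylow subgroups of `G`. If `Y` has only one,
`Y` normalizes it and `q + 1 = |G : N_G(Q)|` divides the odd index `|G : Y|`, which is absurd.
Otherwise `Y` has at least `q + 1` of them, hence contains every Sylow `q`-subgroup of `G`, hence
every transvection; these generate the socle `S`, and then `Y = Y·S = G`.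
-/

open Matrix Subgroup SpecialLinearGroup

namespace Sylow

variable {G : Type*} [Group G] [Finite G] {p : ℕ} [Fact p.Prime] {H : Subgroup G}

def mapSubtype (hH : ¬ p ∣ H.index) (P : Sylow p H) : Sylow p G :=
  (P.isPGroup'.map H.subtype).toSylow <| by
    rw [index_map_subtype]
    exact Nat.Prime.not_dvd_mul Fact.out P.not_dvd_index hH

theorem mapSubtype_injective (hH : ¬ p ∣ H.index) :
    Function.Injective (mapSubtype (p := p) hH) := fun _ _ h =>
  Sylow.ext <| map_injective H.subtype_injective <| congrArg Sylow.toSubgroup h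

theorem card_dvd_index_of_card_eq_one (hH : ¬ p ∣ H.index) (h1 : Nat.card (Sylow p H) = 1) :
    Nat.card (Sylow p G) ∣ H.index := by
  obtain ⟨P⟩ := (Sylow.nonempty : Nonempty (Sylow p H))
  have : Subsingleton (Sylow p H) := (Nat.card_eq_one_iff_unique.mp h1).1
  have hP := normalizer_eq_top_iff.mpr P.normal_of_subsingleton
  have hle : H ≤ normalizer ((P.mapSubtype hH : Subgroup G) : Set G) := by
    have := le_normalizer_map (H := (P : Subgroup H)) H.subtype
    rwa [hP, ← MonoidHom.range_eq_map, range_subtype] at this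
  rw [card_eq_index_normalizer (P.mapSubtype hH)]
  exact index_dvd_of_le hle

theorem le_of_card_eq (hH : ¬ p ∣ H.index)
    (h : Nat.card (Sylow p H) = Nat.card (Sylow p G)) (P : Sylow p G) : (P : Subgroup G) ≤ H := by
  obtain ⟨Q, rfl⟩ :=
    ((Nat.bijective_iff_injective_and_card _).mpr ⟨mapSubtype_injective hH, h⟩).surjective P
  exact map_subtype_le (Q : Subgroup H)

theorem dvd_index_or_le_of_card_eq_add_one (hH : ¬ p ∣ H.index)
    (hG : Nat.card (Sylow p G) = p + 1) :
    p + 1 ∣ H.index ∨ ∀ P : Sylow p G, (P : Subgroup G) ≤ H := by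
  by_cases h1 : Nat.card (Sylow p H) = 1
  · exact .inl (hG ▸ card_dvd_index_of_card_eq_one hH h1)
  refine .inr (le_of_card_eq hH (le_antisymm ?_ ?_))
  · exact hG ▸ Nat.card_le_card_of_injective _ (mapSubtype_injective hH)
  · have hpos : 0 < Nat.card (Sylow p H) := Nat.card_pos
    have hdvd : p ∣ Nat.card (Sylow p H) - 1 :=
      (Nat.modEq_iff_dvd' hpos).mp (card_sylow_modEq_one p H).symm
    have := Nat.le_of_dvd (by omega) hdvd
    omega

end Sylow

theorem Nat.eq_add_one_of_dvd_sq_sub_one {q n : ℕ} (hq : 1 < q) (hn : n ∣ q ^ 2 - 1)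
    (hmod : n ≡ 1 [MOD q]) (hn1 : n ≠ 1) : n = q + 1 := by
  -- with `q² - 1 = n e` and `n ≡ 1`, also `e ≡ -1 (mod q)`, so `e ≥ q - 1` and `n ≤ q + 1`
  obtain ⟨e, he⟩ := hn
  obtain ⟨a, rfl⟩ : ∃ a, n = q * a + 1 :=
    ⟨n / q, by rw [← Eq.trans hmod (Nat.mod_eq_of_lt hq), Nat.div_add_mod]⟩
  have ha : a ≠ 0 := by rintro rfl; simp at hn1
  have hsq : q * (a * e) + (e + 1) = q ^ 2 := by
    have : 1 ≤ q ^ 2 := Nat.one_le_pow _ _ (by omega)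
    rw [← Nat.sub_add_cancel this, he]; ring
  have he1 : q ≤ e + 1 := Nat.le_of_dvd e.succ_pos <|
    (Nat.dvd_add_right (dvd_mul_right q _)).mp (hsq ▸ dvd_pow_self q two_ne_zero)
  suffices a = 1 by simp [this]
  by_contra h
  have h2a : 2 ≤ a := by omega
  nlinarith [Nat.mul_le_mul_left q he1, Nat.mul_le_mul_left q (Nat.mul_le_mul_right e h2a)]

namespace Matrix.SpecialLinearGroup

section CommRing

variable {n R : Type*} [Fintype n] [DecidableEq n] [CommRing R]

lemma transvection_zpow {i j : n} (hij : i ≠ j) (b : R) (k : ℤ) :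
    transvection hij b ^ k = transvection hij (k * b) := by
  induction k using Int.induction_on with
  | zero => simp
  | succ k ih =>
    rw [_root_.zpow_add_one, ih, ← transvection_add]; push_cast; ring_nf
  | pred k ih =>
    rw [_root_.zpow_sub_one, ih, transvection_inv, ← transvection_add]; push_cast; ring_nf

variable (n R) in
noncomputable abbrev toGLQuotCenter : SpecialLinearGroup n R →* GL n R ⧸ center (GL n R) :=
  (QuotientGroup.mk' _).comp toGL

lemma toGLQuotCenter_eq_one_iff (A : SpecialLinearGroup n R) :
    toGLQuotCenter n R A = 1 ↔ A ∈ center (SpecialLinearGroup n R) := by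
  simp [QuotientGroup.eq_one_iff, toGL_mem_center_iff]

lemma toGLQuotCenter_transvection_eq_one_iff {i j : n} (hij : i ≠ j) (b : R) :
    toGLQuotCenter n R (transvection hij b) = 1 ↔ b = 0 := by
  rw [toGLQuotCenter_eq_one_iff, transvection_mem_center_iff]

lemma orderOf_toGLQuotCenter_transvection {p : ℕ} [Fact p.Prime] [CharP R p] {i j : n}
    (hij : i ≠ j) {b : R} (hb : b ≠ 0) :
    orderOf (toGLQuotCenter n R (transvection hij b)) = p := by
  refine orderOf_eq_prime ?_ (by rwa [Ne, toGLQuotCenter_transvection_eq_one_iff])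
  rw [← map_pow, ← zpow_natCast, transvection_zpow]
  simp

lemma toGLQuotCenter_transvection_mem_zpowers_iff {i j : n} (hij : i ≠ j) (b c : R) :
    toGLQuotCenter n R (transvection hij b) ∈
      zpowers (toGLQuotCenter n R (transvection hij.symm c)) ↔ b = 0 := by
  refine ⟨fun ⟨k, hk⟩ => ?_, fun hb => by simp [hb]⟩
  dsimp only at hk
  have hcen : transvection hij.symm (-(k * c)) * transvection hij b ∈
      center (SpecialLinearGroup n R) := by
    rw [← toGLQuotCenter_eq_one_iff, map_mul, ← transvection_inv, map_inv, ← hk, ← map_zpow,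
      transvection_zpow, inv_mul_cancel]
  obtain ⟨r, -, hr⟩ := mem_center_iff.mp hcen
  -- the `(i, j)` entry of that central, hence scalar, matrix is `b`
  have := congr($hr i j)
  simp only [coe_mul, transvection_coe, mul_add, add_mul, Matrix.one_mul, Matrix.mul_one,
    single_mul_single_same] at this
  simpa [hij, hij.symm, Matrix.single_apply, eq_comm] using this

end CommRing

section Field

variable {F : Type*} [Field F]

lemma range_toGLQuotCenter_le {K : Subgroup (GL (Fin 2) F ⧸ center (GL (Fin 2) F))}
    (hK : ∀ (i j : Fin 2) (hij : i ≠ j) (c : F),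
      toGLQuotCenter (Fin 2) F (transvection hij c) ∈ K) :
    (toGLQuotCenter (Fin 2) F).range ≤ K := by
  rintro _ ⟨A, rfl⟩
  induction A using SL2.transvection_induction with
  | htransvec i j hij c => exact hK i j hij c
  | hmul A B hA hB => rw [map_mul]; exact mul_mem hA hB

end Field

end Matrix.SpecialLinearGroup

theorem Matrix.GeneralLinearGroup.card_quotient_center_fin_two (F : Type*) [Field F] [Fintype F] :
    Nat.card (GL (Fin 2) F ⧸ center (GL (Fin 2) F)) =
      Fintype.card F * (Fintype.card F ^ 2 - 1) := by
  have hcenter : Nat.card (center (GL (Fin 2) F)) = Fintype.card F - 1 := by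
    have hinj : Function.Injective (GeneralLinearGroup.scalar (Fin 2) (R := F)) := fun a b h =>
      Units.ext (Matrix.scalar_inj.mp (congrArg Units.val h))
    rw [GeneralLinearGroup.center_eq_range_scalar,
      ← Nat.card_congr (MonoidHom.ofInjective hinj).toEquiv, Nat.card_units,
      Nat.card_eq_fintype_card]
  have hGL := card_GL_field (𝔽 := F) 2
  rw [card_eq_card_quotient_mul_card_subgroup (center (GL (Fin 2) F)), hcenter,
    Fin.prod_univ_two, Fin.val_zero, Fin.val_one, pow_zero, pow_one, sq,
    ← Nat.mul_sub_one (Fintype.card F)] at hGL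
  have hq : 1 < Fintype.card F := Fintype.one_lt_card
  apply Nat.eq_of_mul_eq_mul_right (show 0 < Fintype.card F - 1 by omega)
  rw [hGL, sq]
  ring

lemma socPGL_eq_range (q : ℕ) : socPGL q = (toGLQuotCenter (Fin 2) (ZMod q)).range :=
  rfl

section PGL

variable {q : ℕ} [Fact q.Prime]

lemma card_PGL : Nat.card (PGL q) = q * (q ^ 2 - 1) := by
  rw [GeneralLinearGroup.card_quotient_center_fin_two, ZMod.card]

lemma factorization_card_PGL : (Nat.card (PGL q)).factorization q = 1 := by
  have hq : q.Prime := Fact.out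
  have hndvd : ¬ q ∣ q ^ 2 - 1 := fun h => hq.one_lt.ne' <| Nat.dvd_one.mp <| by
    simpa [Nat.sub_sub_self (Nat.one_le_pow _ _ hq.pos)] using
      Nat.dvd_sub (dvd_pow_self q two_ne_zero) h
  have hne : q ^ 2 - 1 ≠ 0 := fun h => hndvd (h ▸ dvd_zero q)
  rw [card_PGL, Nat.factorization_mul hq.ne_zero hne, Finsupp.add_apply, hq.factorization_self,
    Nat.factorization_eq_zero_of_not_dvd hndvd]

noncomputable def sylowZpowers {x : PGL q} (hx : orderOf x = q) : Sylow q (PGL q) :=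
  Sylow.ofCard (zpowers x) (by rw [Nat.card_zpowers, hx, factorization_card_PGL, pow_one])

theorem card_sylow_PGL : Nat.card (Sylow q (PGL q)) = q + 1 := by
  have hq : q.Prime := Fact.out
  have hupper :=
    orderOf_toGLQuotCenter_transvection (R := ZMod q) (zero_ne_one' (Fin 2)) one_ne_zero
  have hlower :=
    orderOf_toGLQuotCenter_transvection (R := ZMod q) (one_ne_zero' (Fin 2)) one_ne_zero
  have hne : sylowZpowers hupper ≠ sylowZpowers hlower := fun h => by
    have hmem : toGLQuotCenter (Fin 2) (ZMod q) (transvection (one_ne_zero' (Fin 2)) 1) ∈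
        (sylowZpowers hlower : Subgroup (PGL q)) := mem_zpowers _
    rw [← h] at hmem
    exact one_ne_zero ((toGLQuotCenter_transvection_mem_zpowers_iff _ 1 1).mp hmem)
  have hindex : (sylowZpowers hupper : Subgroup (PGL q)).index = q ^ 2 - 1 := by
    have := card_mul_index (sylowZpowers hupper : Subgroup (PGL q))
    rw [card_PGL, sylowZpowers, Sylow.coe_ofCard, Nat.card_zpowers, hupper] at this
    exact Nat.eq_of_mul_eq_mul_left hq.pos this
  refine Nat.eq_add_one_of_dvd_sq_sub_one hq.one_lt (hindex ▸ Sylow.card_dvd_index _)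
    (card_sylow_modEq_one q _) fun h1 => hne ?_
  have := (Nat.card_eq_one_iff_unique.mp h1).1
  exact Subsingleton.elim _ _

lemma socPGL_le_of_forall_sylow_le {Y : Subgroup (PGL q)}
    (hY : ∀ P : Sylow q (PGL q), (P : Subgroup (PGL q)) ≤ Y) : socPGL q ≤ Y := by
  rw [socPGL_eq_range]
  refine range_toGLQuotCenter_le fun i j hij c => ?_
  rcases eq_or_ne c 0 with rfl | hc
  · simp
  · exact hY (sylowZpowers (orderOf_toGLQuotCenter_transvection hij hc)) (mem_zpowers _)

end PGL

/-- Every proper supplement  of the socle of ,  prime, of odd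
index has index divisible by . -/
theorem q_dvd_odd_index_PGL (q : ℕ) (hq : Nat.Prime q) (hq5 : 5 ≤ q)
    (Y : Subgroup (PGL q)) (hY : Y ≠ ⊤)
    (hYS : ∀ g : PGL q, ∃ y ∈ Y, ∃ s ∈ socPGL q, g = y * s)
    (hodd : Odd Y.index) :
    q ∣ Y.index := by
  have := Fact.mk hq
  by_contra hqY
  rcases Sylow.dvd_index_or_le_of_card_eq_add_one hqY card_sylow_PGL with hdvd | hle
  · have hq_odd : Odd q := hq.odd_of_ne_two (by omega)
    exact Nat.not_even_iff_odd.mpr hodd (even_iff_two_dvd.mpr (hq_odd.add_one.two_dvd.trans hdvd))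
  · refine hY (eq_top_iff.mpr fun g _ => ?_)
    obtain ⟨y, hy, s, hs, rfl⟩ := hYS g
    exact mul_mem hy (socPGL_le_of_forall_sylow_le hle hs)
end

section
/- The minimum of Ω(PSL(2,7)) is 7: that is, 7 ∈ Ω(PSL(2,7)) and 7 ≤ m for every m ∈ Ω(PSL(2,7)). (Lemma 2.7, case q = 7, X = PSL(2,7)) -/
/-- `Ω(PSL(2,q))`: odd natural numbers `m` such that `PSL(2,q)` has a subgroup of
index `m` and every subgroup of index `m` is maximal. -/
def OmegaPSL (q : ℕ) : Set ℕ :=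
  {m : ℕ | Odd m ∧ (∃ H : Subgroup (PSL q), H.index = m) ∧
    ∀ H : Subgroup (PSL q), H.index = m → IsCoatom H}

/-!
Since 7 is prime, every subgroup of index 7 is maximal, and one exists: the stabilizer up to
scalars in `SL(2,7)` of the sextic `x⁶ + x³y³ - y⁶`, whose six roots on the projective line over
`𝔽₄₉` are the vertices of an octahedron, is the binary octahedral group of order `48 = 336 / 7`,
and it contains the centre. No proper subgroup has index `m < 7`: an element of order 7 outside
it would have an orbit of length 7 on its `m` cosets, so it contains all transvections, and these
generate `SL(2,7)`.
-/

open Matrix MatrixGroups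

namespace Subgroup

variable {G : Type*} [Group G] {H : Subgroup G} {p : ℕ}

theorem isCoatom_of_index_prime (hp : p.Prime) (h : H.index = p) : IsCoatom H := by
  refine ⟨fun hH ↦ hp.one_lt.ne' (by rw [← h, hH, index_top]), fun K hHK ↦ ?_⟩
  have hK : K.index ∣ p := h ▸ index_dvd_of_le hHK.le
  rcases (Nat.dvd_prime hp).1 hK with hK1 | hKp
  · exact index_eq_one.mp hK1
  · refine absurd (relIndex_eq_one.mp ?_) hHK.not_ge
    have := relIndex_mul_index hHK.le
    rw [h, hKp] at this
    exact (Nat.mul_eq_right hp.ne_zero).mp this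

theorem mem_of_pow_prime_eq_one_of_index_lt [H.FiniteIndex] (hp : p.Prime) {x : G}
    (hx : x ^ p = 1) (h : H.index < p) : x ∈ H := by
  have hdvd : H.relIndex (zpowers x) ∣ p :=
    (relIndex_dvd_card H _).trans (Nat.card_zpowers x ▸ orderOf_dvd_of_pow_eq_one hx)
  have hle : H.relIndex (zpowers x) ≤ H.index := by
    rw [← relIndex_top_right]
    exact relIndex_le_of_le_right le_top (relIndex_top_right H ▸ FiniteIndex.index_ne_zero)
  rcases (Nat.dvd_prime hp).1 hdvd with hone | hfull
  · exact relIndex_eq_one.mp hone (mem_zpowers x)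
  · omega

end Subgroup

namespace Matrix.SpecialLinearGroup

variable {ι F : Type*} [DecidableEq ι] [Fintype ι] [CommRing F] {i j : ι}

theorem transvection_pow (hij : i ≠ j) (b : F) (n : ℕ) :
    transvection hij b ^ n = transvection hij (n * b) := by
  induction n with
  | zero => simp
  | succ n ih => rw [pow_succ, ih, ← transvection_add, Nat.cast_succ, add_one_mul]

theorem transvection_pow_char (p : ℕ) [CharP F p] (hij : i ≠ j) (b : F) :
    transvection hij b ^ p = 1 := by
  simp [transvection_pow]

end Matrix.SpecialLinearGroup

theorem Matrix.SL2.eq_top_of_index_lt_char {F : Type*} [Field F] {p : ℕ} [CharP F p]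
    (hp : p.Prime) (H : Subgroup SL(2, F)) [H.FiniteIndex] (h : H.index < p) : H = ⊤ :=
  eq_top_iff.mpr fun g _ ↦ SL2.transvection_induction (· ∈ H)
    (fun _ _ hij b ↦ H.mem_of_pow_prime_eq_one_of_index_lt hp
      (SpecialLinearGroup.transvection_pow_char p hij b) h)
    (fun _ _ ↦ H.mul_mem) g

theorem PSL.eq_top_of_index_lt {q : ℕ} (hq : q.Prime) (H : Subgroup (PSL q)) (h : H.index < q) :
    H = ⊤ := by
  have : Fact q.Prime := ⟨hq⟩
  let π := QuotientGroup.mk' (Subgroup.center SL(2, ZMod q))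
  have hπ : Function.Surjective π := QuotientGroup.mk'_surjective _
  have hcomap : H.comap π = ⊤ :=
    SL2.eq_top_of_index_lt_char hq _ (by rwa [Subgroup.index_comap_of_surjective _ hπ])
  rw [← Subgroup.map_comap_eq_self_of_surjective hπ H, hcomap, ← MonoidHom.range_eq_map,
    MonoidHom.range_eq_top_of_surjective _ hπ]

section ProjectiveStabilizer

variable {G V F : Type*} [Group G] [MulAction G V] [Monoid F]

def projectiveStabilizer (f : V → F) : Subgroup G where
  carrier := {g | ∃ c : Fˣ, ∀ v, f (g • v) = c * f v}
  one_mem' := ⟨1, by simp⟩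
  mul_mem' := by
    rintro g h ⟨c, hc⟩ ⟨d, hd⟩
    exact ⟨c * d, fun v ↦ by rw [mul_smul, hc, hd, Units.val_mul, mul_assoc]⟩
  inv_mem' := by
    rintro g ⟨c, hc⟩
    refine ⟨c⁻¹, fun v ↦ ?_⟩
    rw [Units.eq_inv_mul_iff_mul_eq, ← hc, smul_inv_smul]

theorem mem_projectiveStabilizer {f : V → F} {g : G} :
    g ∈ projectiveStabilizer f ↔ ∃ c : Fˣ, ∀ v, f (g • v) = c * f v := Iff.rfl

instance [Fintype V] [Fintype F] [DecidableEq F] (f : V → F) :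
    DecidablePred (· ∈ projectiveStabilizer (G := G) f) :=
  fun _ ↦ decidable_of_iff' _ mem_projectiveStabilizer

end ProjectiveStabilizer

theorem card_SL_two_zmod_seven : Nat.card SL(2, ZMod 7) = 336 := by
  rw [Nat.card_eq_fintype_card]
  decide +kernel

def octahedralSextic (v : Fin 2 → ZMod 7) : ZMod 7 := v 0 ^ 6 + v 0 ^ 3 * v 1 ^ 3 - v 1 ^ 6

theorem card_projectiveStabilizer_octahedralSextic :
    Nat.card (projectiveStabilizer (G := SL(2, ZMod 7)) octahedralSextic) = 48 := by
  rw [Nat.card_eq_fintype_card]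
  decide +kernel

theorem octahedralSextic_smul (r : ZMod 7) (v : Fin 2 → ZMod 7) :
    octahedralSextic (r • v) = r ^ 6 * octahedralSextic v := by
  simp only [octahedralSextic, Pi.smul_apply, smul_eq_mul]
  ring

theorem center_le_projectiveStabilizer_octahedralSextic :
    Subgroup.center SL(2, ZMod 7) ≤ projectiveStabilizer octahedralSextic := by
  intro z hz
  obtain ⟨r, hr, hrz⟩ := Matrix.SpecialLinearGroup.mem_center_iff.mp hz
  rw [Fintype.card_fin] at hr
  refine ⟨1, fun v ↦ ?_⟩
  rw [Matrix.SpecialLinearGroup.smul_def, ← hrz]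
  have hscalar : scalar (Fin 2) r • v = r • v := by
    ext i; simp [scalar_apply, smul_eq_mulVec, mulVec_diagonal]
  rw [hscalar, octahedralSextic_smul, show r ^ 6 = (r ^ 2) ^ 3 by ring, hr]
  simp

theorem PSL.exists_index_eq_seven : ∃ H : Subgroup (PSL 7), H.index = 7 := by
  refine ⟨(projectiveStabilizer octahedralSextic).map (QuotientGroup.mk' _), ?_⟩
  rw [Subgroup.index_map_eq _ (QuotientGroup.mk'_surjective _)
    (by rw [QuotientGroup.ker_mk']; exact center_le_projectiveStabilizer_octahedralSextic)]
  have := (projectiveStabilizer (G := SL(2, ZMod 7)) octahedralSextic).card_mul_index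
  rw [card_projectiveStabilizer_octahedralSextic, card_SL_two_zmod_seven] at this
  omega

/-- Lemma 2.7, case `X = PSL(2,7)`. -/
theorem min_OmegaPSL_7 :
    (7 : ℕ) ∈ OmegaPSL 7 ∧ ∀ m ∈ OmegaPSL 7, (7 : ℕ) ≤ m := by
  refine ⟨⟨by decide, PSL.exists_index_eq_seven,
    fun H hH ↦ H.isCoatom_of_index_prime (by norm_num) hH⟩, ?_⟩
  rintro m ⟨-, ⟨H, rfl⟩, hmax⟩
  by_contra! hlt
  exact (hmax H rfl).ne_top (PSL.eq_top_of_index_lt (by norm_num) H hlt)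
end
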